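/- arXiv:math/0112318 — 3 statements merged into one kernel-verified Lean document; each statement's English description precedes it below -/
import Mathlib

section
/- For every ε > 0 and every m ∈ ℕ there exists a constant c = c(m, ε) such that for every number field k of degree [k:ℚ] = m and every nonzero ideal a of 𝒪_k, the number t_k(a) of ideal divisors of a in 𝒪_k satisfies t_k(a) ≤ c·N_{k/ℚ}(a)^ε. -/
/-!
Writing `a = ∏ pᵢ ^ eᵢ`, the number of divisors of `a` is `∏ (eᵢ + 1)`. A prime with
`N(p)^ε ≥ 2` contributes `eᵢ + 1 ≤ 2 ^ eᵢ ≤ N(pᵢ ^ eᵢ)^ε`, and every prime contributes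
at most `C(ε) · N(pᵢ ^ eᵢ)^ε`. The primes with `N(p)^ε < 2` have norm at most
`B = ⌈2^(1/ε)⌉`, so they all divide `B!`; since `N(B!) = (B!)^[k:ℚ]` and each has norm at
least `2`, there are fewer than `(B!)^[k:ℚ]` of them, a bound depending only on `ε` and
the degree.
-/

open NumberField UniqueFactorizationMonoid
open scoped Nat

section RealBounds

open Real

variable {ε : ℝ}

theorem add_one_le_mul_two_rpow (hε : 0 < ε) (e : ℕ) :
    (e + 1 : ℝ) ≤ (1 + (ε * log 2)⁻¹) * 2 ^ (ε * e) := by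
  have hL : 0 < ε * log 2 := mul_pos hε (log_pos one_lt_two)
  have hexp : 1 + ε * log 2 * e ≤ (2 : ℝ) ^ (ε * e) := by
    rw [rpow_def_of_pos two_pos]
    linarith [add_one_le_exp (log 2 * (ε * e))]
  have hexpand : (1 + (ε * log 2)⁻¹) * (1 + ε * log 2 * e) =
      e + 1 + (ε * log 2 * e + (ε * log 2)⁻¹) := by
    field_simp
    ring
  calc (e + 1 : ℝ) ≤ (1 + (ε * log 2)⁻¹) * (1 + ε * log 2 * e) := by
        rw [hexpand]
        exact le_add_of_nonneg_right (by positivity)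
    _ ≤ (1 + (ε * log 2)⁻¹) * 2 ^ (ε * e) := by gcongr

theorem add_one_le_mul_rpow_pow (hε : 0 < ε) {x : ℝ} (hx : 2 ≤ x) (e : ℕ) :
    (e + 1 : ℝ) ≤ (1 + (ε * log 2)⁻¹) * (x ^ e) ^ ε := by
  calc (e + 1 : ℝ) ≤ (1 + (ε * log 2)⁻¹) * 2 ^ (ε * e) := add_one_le_mul_two_rpow hε e
    _ ≤ (1 + (ε * log 2)⁻¹) * x ^ (ε * e) := by gcongr
    _ = (1 + (ε * log 2)⁻¹) * (x ^ e) ^ ε := by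
        rw [← rpow_natCast_mul (by linarith), mul_comm (e : ℝ)]

theorem add_one_le_rpow_pow {x : ℝ} (hx : 0 ≤ x) (h2 : 2 ≤ x ^ ε) (e : ℕ) :
    (e + 1 : ℝ) ≤ (x ^ e) ^ ε :=
  calc (e + 1 : ℝ) ≤ 2 ^ e := by exact_mod_cast e.lt_two_pow_self
    _ ≤ (x ^ ε) ^ e := pow_le_pow_left₀ zero_le_two h2 e
    _ = (x ^ e) ^ ε := rpow_pow_comm hx ε e

end RealBounds

theorem card_subtype_dvd_le_prod_count_add_one {α : Type*} [CommMonoidWithZero α]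
    [UniqueFactorizationMonoid α] [NormalizationMonoid α] [Unique αˣ] [DecidableEq α]
    {a : α} (ha : a ≠ 0) :
    Nat.card {b : α // b ∣ a} ≤
      ∏ p ∈ (normalizedFactors a).toFinset, ((normalizedFactors a).count p + 1) := by
  set F := normalizedFactors a
  have hle : ∀ b : {b : α // b ∣ a}, normalizedFactors b.1 ≤ F := fun b =>
    (dvd_iff_normalizedFactors_le_normalizedFactors (ne_zero_of_dvd_ne_zero ha b.2) ha).mp b.2
  let exponents (b : {b : α // b ∣ a}) (p : F.toFinset) : Fin (F.count p.1 + 1) :=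
    ⟨(normalizedFactors b.1).count p.1, Nat.lt_succ_of_le (Multiset.count_le_of_le _ (hle b))⟩
  have hinj : Function.Injective exponents := by
    intro b b' h
    have hfac : normalizedFactors b.1 = normalizedFactors b'.1 := by
      ext x
      by_cases hx : x ∈ F.toFinset
      · exact congrArg Fin.val (congrFun h ⟨x, hx⟩)
      · have hout (c : {b : α // b ∣ a}) : (normalizedFactors c.1).count x = 0 :=
          Multiset.count_eq_zero.mpr fun hc =>
            hx (Multiset.mem_toFinset.mpr (Multiset.mem_of_le (hle c) hc))
        rw [hout b, hout b']
    exact Subtype.ext <| associated_iff_eq.mp <|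
      (associated_iff_normalizedFactors_eq_normalizedFactors (ne_zero_of_dvd_ne_zero ha b.2)
        (ne_zero_of_dvd_ne_zero ha b'.2)).mpr hfac
  calc Nat.card {b : α // b ∣ a}
      ≤ Nat.card (∀ p : F.toFinset, Fin (F.count p.1 + 1)) :=
        Nat.card_le_card_of_injective _ hinj
    _ = ∏ p ∈ F.toFinset, (F.count p + 1) := by
        simp only [Nat.card_eq_fintype_card, Fintype.card_pi, Fintype.card_fin]
        exact Finset.prod_attach F.toFinset (fun p => F.count p + 1)

namespace Ideal

variable {S : Type*} [CommRing S] [IsDedekindDomain S] [Module.Free ℤ S]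

theorem dvd_span_factorial_of_absNorm_le {I : Ideal S} (hI : 0 < absNorm I) {n : ℕ}
    (hn : absNorm I ≤ n) : I ∣ span {(n ! : S)} := by
  obtain ⟨t, ht⟩ := Nat.dvd_factorial hI hn
  rw [dvd_iff_le, span_le, Set.singleton_subset_iff, SetLike.mem_coe, ht, Nat.cast_mul]
  exact mul_mem_right _ _ (absNorm_mem I)

theorem absNorm_eq_prod_pow_count [DecidableEq (Ideal S)] {a : Ideal S} (ha : a ≠ ⊥) :
    absNorm a = ∏ p ∈ (normalizedFactors a).toFinset,
      absNorm p ^ (normalizedFactors a).count p := by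
  conv_lhs => rw [← associated_iff_eq.mp (prod_normalizedFactors ha)]
  rw [← Finset.prod_multiset_map_count, ← map_multiset_prod]

variable [Module.Finite ℤ S]

theorem two_le_absNorm_of_prime {p : Ideal S} (hp : Prime p) : 2 ≤ absNorm p := by
  have h0 : absNorm p ≠ 0 := absNorm_eq_zero_iff.not.mpr hp.ne_zero
  have h1 : absNorm p ≠ 1 := absNorm_eq_one_iff.not.mpr fun h => hp.not_isUnit (isUnit_iff.mpr h)
  omega

theorem two_pow_card_le_absNorm {T : Finset (Ideal S)} (hT : ∀ p ∈ T, Prime p) {I : Ideal S}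
    (hI : I ≠ ⊥) (hdvd : ∀ p ∈ T, p ∣ I) : 2 ^ T.card ≤ absNorm I :=
  calc 2 ^ T.card = ∏ _p ∈ T, 2 := (Finset.prod_const 2).symm
    _ ≤ ∏ p ∈ T, absNorm p :=
        Finset.prod_le_prod' fun p hp => two_le_absNorm_of_prime (hT p hp)
    _ = absNorm (∏ p ∈ T, p) := (map_prod absNorm _ _).symm
    _ ≤ absNorm I := Nat.le_of_dvd (Nat.pos_of_ne_zero (absNorm_eq_zero_iff.not.mpr hI))
        (map_dvd absNorm (Finset.prod_primes_dvd _ hT hdvd))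

theorem two_pow_card_le_factorial_pow_of_absNorm_le [CharZero S] {T : Finset (Ideal S)} {n : ℕ}
    (hT : ∀ p ∈ T, Prime p ∧ absNorm p ≤ n) :
    2 ^ T.card ≤ n ! ^ Module.finrank ℤ S := by
  rw [← absNorm_span_natCast]
  refine two_pow_card_le_absNorm (fun p hp => (hT p hp).1) ?_ fun p hp =>
    dvd_span_factorial_of_absNorm_le (by have := two_le_absNorm_of_prime (hT p hp).1; omega)
      (hT p hp).2
  rw [Ne, span_singleton_eq_bot]
  exact_mod_cast n.factorial_ne_zero

theorem card_dvd_le_pow_mul_absNorm_rpow [DecidableEq (Ideal S)] {ε : ℝ} (hε : 0 < ε)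
    {a : Ideal S} (ha : a ≠ ⊥) :
    (Nat.card {b : Ideal S // b ∣ a} : ℝ) ≤
      (1 + (ε * Real.log 2)⁻¹) ^
          {p ∈ (normalizedFactors a).toFinset | (absNorm p : ℝ) ^ ε < 2}.card *
        (absNorm a : ℝ) ^ ε := by
  set F := normalizedFactors a
  set C := 1 + (ε * Real.log 2)⁻¹
  have hfactor : ∀ p ∈ F.toFinset, (F.count p + 1 : ℝ) ≤
      (if (absNorm p : ℝ) ^ ε < 2 then C else 1) * ((absNorm p : ℝ) ^ F.count p) ^ ε := by
    intro p hp
    have hprime : Prime p := prime_of_normalized_factor p (Multiset.mem_toFinset.mp hp)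
    split_ifs with hsmall
    · exact add_one_le_mul_rpow_pow hε (by exact_mod_cast two_le_absNorm_of_prime hprime) _
    · rw [one_mul]
      exact add_one_le_rpow_pow (Nat.cast_nonneg _) (not_lt.mp hsmall) _
  calc (Nat.card {b : Ideal S // b ∣ a} : ℝ)
        ≤ ∏ p ∈ F.toFinset, (F.count p + 1 : ℝ) := by
        exact_mod_cast card_subtype_dvd_le_prod_count_add_one ha
    _ ≤ ∏ p ∈ F.toFinset,
          (if (absNorm p : ℝ) ^ ε < 2 then C else 1) * ((absNorm p : ℝ) ^ F.count p) ^ ε :=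
        Finset.prod_le_prod (fun _ _ => by positivity) hfactor
    _ = C ^ {p ∈ F.toFinset | (absNorm p : ℝ) ^ ε < 2}.card *
          ∏ p ∈ F.toFinset, ((absNorm p : ℝ) ^ F.count p) ^ ε := by
        rw [Finset.prod_mul_distrib, Finset.prod_ite, Finset.prod_const, Finset.prod_const_one,
          mul_one]
    _ = C ^ {p ∈ F.toFinset | (absNorm p : ℝ) ^ ε < 2}.card * (absNorm a : ℝ) ^ ε := by
        rw [Real.finsetProd_rpow _ _ fun _ _ => by positivity, absNorm_eq_prod_pow_count ha]
        push_cast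
        rfl

end Ideal

/-- Uniform divisor bound: for every `ε > 0` and `m`, there is a constant `c(m, ε)` such that
for every number field `k` of degree `m` and every nonzero ideal `a` of `𝓞 k`, the number of
ideal divisors of `a` is at most `c · N(a)^ε`. -/
theorem ideal_divisor_bound (ε : ℝ) (hε : 0 < ε) (m : ℕ) :
    ∃ c : ℝ, ∀ (k : Type) [Field k] [NumberField k], Module.finrank ℚ k = m →
      ∀ a : Ideal (𝓞 k), a ≠ ⊥ →
        (Nat.card {b : Ideal (𝓞 k) // b ∣ a} : ℝ) ≤ c * (Ideal.absNorm a : ℝ) ^ ε := by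
  classical
  set B := ⌈(2 : ℝ) ^ ε⁻¹⌉₊
  refine ⟨(1 + (ε * Real.log 2)⁻¹) ^ (B ! ^ m), fun k _ _ hm a ha => ?_⟩
  set small := {p ∈ (normalizedFactors a).toFinset | (Ideal.absNorm p : ℝ) ^ ε < 2}
  have hsmall : ∀ p ∈ small, Prime p ∧ Ideal.absNorm p ≤ B := by
    intro p hp
    obtain ⟨hpa, hpε⟩ := Finset.mem_filter.mp hp
    refine ⟨prime_of_normalized_factor p (Multiset.mem_toFinset.mp hpa), ?_⟩
    have hlt : (Ideal.absNorm p : ℝ) < 2 ^ ε⁻¹ := by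
      rwa [← Real.rpow_inv_lt_iff_of_pos (Nat.cast_nonneg _) zero_le_two (inv_pos.mpr hε),
        inv_inv]
    exact_mod_cast hlt.le.trans (Nat.le_ceil _)
  have hcard : small.card ≤ B ! ^ m := by
    have h := Ideal.two_pow_card_le_factorial_pow_of_absNorm_le hsmall
    rw [RingOfIntegers.rank, hm] at h
    exact (Nat.lt_two_pow_self).le.trans h
  calc (Nat.card {b : Ideal (𝓞 k) // b ∣ a} : ℝ)
      ≤ (1 + (ε * Real.log 2)⁻¹) ^ small.card * (Ideal.absNorm a : ℝ) ^ ε :=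
        Ideal.card_dvd_le_pow_mul_absNorm_rpow hε ha
    _ ≤ (1 + (ε * Real.log 2)⁻¹) ^ (B ! ^ m) * (Ideal.absNorm a : ℝ) ^ ε := by
        gcongr
        exact le_add_of_nonneg_right (by positivity)
end

section
/- Let k be a number field, S a finite set of prime ideals of 𝒪_k, and ℓ a prime. For a nonzero α ∈ 𝒪_k with prime ideal factorization (α) = ∏_p p^{e_p}, let φ̃(α) := ∏_{p ∉ S} p^{e_p} be the prime-to-S part of (α). Let φ be the induced map from nonzero elements of 𝒪_k modulo ℓ-th powers of k^× to the group I_k/I_k^ℓ of fractional ideals modulo ℓ-th powers. Then every fiber of φ is finite of size at most ℓ^{|S|+r+u+1}, where u is the unit rank of 𝒪_k and r is the ℓ-rank of the class group of k (the dimension of Cl(k)/Cl(k)^ℓ over 𝔽_ℓ). -/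
/-!
Fixing the residues modulo `ℓ` of the valuations at the primes of `S` splits a fiber into at most
`ℓ^|S|` pieces. Inside one piece, `(α) = (α₀) C^ℓ` for fractional ideals `C`, and the class of `C`
lies in `Cl(k)[ℓ]`, which has as many elements as `Cl(k)/Cl(k)^ℓ`. If two elements give the same
class, then `α = ε x^ℓ α₁` with a unit `ε`, and two elements with the same `ε` modulo `ℓ`-th powers
of units would be equivalent. Finally `|𝒪_k^×/(𝒪_k^×)^ℓ| ≤ ℓ^{u+1}`, since `𝒪_k^×` is generated by
a root of unity and `u` fundamental units.
-/

open NumberField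

open scoped Classical in
/-- The prime-to-`S` part of an ideal `I`: the product of `p^{v_p(I)}` over the prime factors
`p ∉ S` of `I`. -/
noncomputable def primeToSIdeal (k : Type) [Field k] [NumberField k]
    (S : Finset (Ideal (𝓞 k))) (I : Ideal (𝓞 k)) : Ideal (𝓞 k) :=
  ∏ p ∈ (UniqueFactorizationMonoid.normalizedFactors I).toFinset.filter (fun p => p ∉ S),
    p ^ (UniqueFactorizationMonoid.normalizedFactors I).count p

open scoped nonZeroDivisors
open FractionalIdeal UniqueFactorizationMonoid

theorem encard_le_encard_mul_of_forall_exists {α β : Type*} {s : Set α} {t : Set β}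
    (ht : t.Finite) (r : α → β → Prop) (hs : ∀ a ∈ s, ∃ b ∈ t, r a b) {n : ℕ∞}
    (hfib : ∀ b ∈ t, {a ∈ s | r a b}.encard ≤ n) : s.encard ≤ t.encard * n := by
  have hcover : s ⊆ ⋃ b ∈ ht.toFinset, {a ∈ s | r a b} := fun a ha => by
    obtain ⟨b, hb, hab⟩ := hs a ha
    exact Set.mem_biUnion (ht.mem_toFinset.mpr hb) ⟨ha, hab⟩
  calc s.encard ≤ ∑ b ∈ ht.toFinset, {a ∈ s | r a b}.encard :=
        (Set.encard_le_encard hcover).trans (ht.toFinset.set_encard_biUnion_le _)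
    _ ≤ ∑ _b ∈ ht.toFinset, n := Finset.sum_le_sum fun b hb => hfib b (ht.mem_toFinset.mp hb)
    _ = t.encard * n := by rw [Finset.sum_const, nsmul_eq_mul, ht.encard_eq_coe_toFinset_card]

theorem mul_prod_pow_mul_pow_eq_of_mod_eq {M ι : Type*} [CommMonoid M] {ℓ : ℕ} (s : Finset ι)
    (p : ι → M) {e f : ι → ℕ} (hef : ∀ i ∈ s, e i % ℓ = f i % ℓ) {P P' J J' : M}
    (h : P * J ^ ℓ = P' * J' ^ ℓ) :
    (P * ∏ i ∈ s, p i ^ e i) * (J * ∏ i ∈ s, p i ^ (f i / ℓ)) ^ ℓ =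
      (P' * ∏ i ∈ s, p i ^ f i) * (J' * ∏ i ∈ s, p i ^ (e i / ℓ)) ^ ℓ := by
  have hsplit (g : ι → ℕ) : ∏ i ∈ s, p i ^ g i =
      (∏ i ∈ s, p i ^ (g i % ℓ)) * (∏ i ∈ s, p i ^ (g i / ℓ)) ^ ℓ := by
    rw [← Finset.prod_pow, ← Finset.prod_mul_distrib]
    exact Finset.prod_congr rfl fun i _ => by rw [← pow_mul, ← pow_add, Nat.mod_add_div']
  have hmod : ∏ i ∈ s, p i ^ (e i % ℓ) = ∏ i ∈ s, p i ^ (f i % ℓ) :=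
    Finset.prod_congr rfl fun i hi => by rw [hef i hi]
  rw [hsplit e, hsplit f, hmod]
  calc _ = (P * J ^ ℓ) * ((∏ i ∈ s, p i ^ (f i % ℓ)) * (∏ i ∈ s, p i ^ (e i / ℓ)) ^ ℓ *
          (∏ i ∈ s, p i ^ (f i / ℓ)) ^ ℓ) := by rw [mul_pow]; ac_rfl
    _ = _ := by rw [h, mul_pow]; ac_rfl

theorem MonoidHom.card_ker_eq_index_range {G : Type*} [Group G] [Finite G] (f : G →* G) :
    Nat.card f.ker = f.range.index := by
  refine Nat.eq_of_mul_eq_mul_right (Nat.card_pos (α := f.range)) ?_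
  rw [mul_comm f.range.index, Subgroup.card_mul_index, ← Subgroup.index_ker,
    Subgroup.card_mul_index]

theorem card_quotient_range_powMonoidHom_le {G ι : Type*} [CommGroup G] [Fintype ι] (ℓ : ℕ)
    [NeZero ℓ] (g : ι → G) (hg : Subgroup.closure (Set.range g) = ⊤) :
    Nat.card (G ⧸ (powMonoidHom ℓ : G →* G).range) ≤ ℓ ^ Fintype.card ι := by
  let F : (ι → ZMod ℓ) → G ⧸ (powMonoidHom ℓ : G →* G).range :=
    fun v => ∏ i, (g i : G ⧸ (powMonoidHom ℓ : G →* G).range) ^ (v i).val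
  have hF : Function.Surjective F := by
    intro y
    induction y using QuotientGroup.induction_on with | H x =>
    obtain ⟨n, rfl⟩ := Subgroup.mem_closure_range_iff_of_fintype.mp (hg ▸ Subgroup.mem_top x)
    refine ⟨fun i => (n i : ZMod ℓ), ?_⟩
    rw [QuotientGroup.mk_prod]
    refine Finset.prod_congr rfl fun i _ => ?_
    have hℓ : (g i : G ⧸ (powMonoidHom ℓ : G →* G).range) ^ ℓ = 1 :=
      (QuotientGroup.eq_one_iff _).mpr ⟨g i, rfl⟩
    dsimp only
    rw [QuotientGroup.mk_zpow, zpow_eq_zpow_emod' (n i) hℓ, ← ZMod.val_intCast, zpow_natCast]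
  calc _ ≤ Nat.card (ι → ZMod ℓ) := Nat.card_le_card_of_surjective F hF
    _ = ℓ ^ Fintype.card ι := by rw [Nat.card_fun, Nat.card_zmod, Nat.card_eq_fintype_card]

theorem NumberField.Units.card_quotient_range_powMonoidHom_le (k : Type*) [Field k]
    [NumberField k] (ℓ : ℕ) [NeZero ℓ] :
    Nat.card ((𝓞 k)ˣ ⧸ (powMonoidHom ℓ : (𝓞 k)ˣ →* (𝓞 k)ˣ).range) ≤ ℓ ^ (Units.rank k + 1) := by
  obtain ⟨ζ, hζ⟩ := IsCyclic.exists_generator (α := Units.torsion k)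
  let g : Option (Fin (Units.rank k)) → (𝓞 k)ˣ := fun i => i.elim ζ (Units.fundSystem k)
  have hg : Subgroup.closure (Set.range g) = ⊤ := by
    rw [eq_top_iff, ← Units.closure_fundSystem_sup_torsion_eq_top]
    refine sup_le (Subgroup.closure_mono fun _ ⟨i, hi⟩ => ⟨some i, hi⟩) fun x hx => ?_
    obtain ⟨n, hn⟩ := Subgroup.mem_zpowers_iff.mp (hζ ⟨x, hx⟩)
    have hxζ : (ζ : (𝓞 k)ˣ) ^ n = x := congrArg Subtype.val hn
    rw [← hxζ]
    exact zpow_mem (Subgroup.subset_closure (Set.mem_range_self none)) n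
  simpa using _root_.card_quotient_range_powMonoidHom_le ℓ g hg

section FractionField

variable {R K : Type*} [CommRing R] [IsDomain R] [Field K] [Algebra R K] [IsFractionRing R K]

theorem ClassGroup.exists_spanSingleton_mul_of_mk_eq {I J : (FractionalIdeal R⁰ K)ˣ}
    (h : ClassGroup.mk K I = ClassGroup.mk K J) :
    ∃ x : K, (I : FractionalIdeal R⁰ K) = spanSingleton R⁰ x * J := by
  have hprincipal : ClassGroup.mk K (I * J⁻¹) = 1 := by
    rw [map_mul, map_inv, h, mul_inv_cancel]
  obtain ⟨x, hx⟩ := (isPrincipal_iff _).mp (ClassGroup.mk_eq_one_iff.mp hprincipal)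
  exact ⟨x, by rw [← hx, ← Units.val_mul, inv_mul_cancel_right]⟩

theorem encard_le_card_units_quotient {ℓ : ℕ} (hℓ : ℓ ≠ 0) {B : Set R}
    (hB : B.Pairwise fun a b => ¬∃ γ : K, algebraMap R K a = γ ^ ℓ * algebraMap R K b)
    (h0 : ∀ a ∈ B, a ≠ 0) [Finite (Rˣ ⧸ (powMonoidHom ℓ : Rˣ →* Rˣ).range)] (a₁ : R)
    (ha₁ : ∀ a ∈ B, ∃ x : K, spanSingleton R⁰ (algebraMap R K a) =
      spanSingleton R⁰ (x ^ ℓ * algebraMap R K a₁)) :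
    B.encard ≤ Nat.card (Rˣ ⧸ (powMonoidHom ℓ : Rˣ →* Rˣ).range) := by
  calc B.encard ≤ (Set.univ : Set (Rˣ ⧸ (powMonoidHom ℓ : Rˣ →* Rˣ).range)).encard * 1 :=
        encard_le_encard_mul_of_forall_exists Set.finite_univ
          (fun a q => ∃ (ε : Rˣ) (x : K), (ε : Rˣ ⧸ (powMonoidHom ℓ : Rˣ →* Rˣ).range) = q ∧
            algebraMap R K a = algebraMap R K ε * (x ^ ℓ * algebraMap R K a₁)) ?_ ?_
    _ = _ := by rw [mul_one, Set.encard_univ, ENat.card_eq_coe_natCard]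
  · intro a ha
    obtain ⟨x, hx⟩ := ha₁ a ha
    obtain ⟨ε, hε⟩ := spanSingleton_eq_spanSingleton.mp hx.symm
    exact ⟨ε, trivial, ε, x, rfl, by rw [← hε, Units.smul_def, Algebra.smul_def]⟩
  · intro q _
    rw [Set.encard_le_one_iff]
    rintro a b ⟨ha, εa, xa, rfl, hεa⟩ ⟨hb, εb, xb, hq, hεb⟩
    by_contra hne
    obtain ⟨η, hη⟩ := QuotientGroup.eq.mp hq.symm
    rw [powMonoidHom_apply] at hη
    have hεab : algebraMap R K εb = algebraMap R K εa * algebraMap R K η ^ ℓ := by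
      rw [← map_pow, ← map_mul, ← Units.val_pow_eq_pow_val, ← Units.val_mul,
        ← inv_mul_eq_iff_eq_mul.mp hη.symm]
    have hη0 : algebraMap R K η ≠ 0 := (η.isUnit.map _).ne_zero
    have hxb : xb ≠ 0 := by
      rintro rfl
      rw [zero_pow hℓ, zero_mul, mul_zero, map_eq_zero_iff _ (IsFractionRing.injective R K)] at hεb
      exact h0 b hb hεb
    refine hB ha hb hne ⟨xa / (algebraMap R K η * xb), ?_⟩
    rw [hεa, hεb, hεab, div_pow, mul_pow]
    field_simp

theorem encard_le_card_classGroup_quotient_mul_card_units_quotient {ℓ : ℕ} (hℓ : ℓ ≠ 0)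
    {B : Set R}
    (hB : B.Pairwise fun a b => ¬∃ γ : K, algebraMap R K a = γ ^ ℓ * algebraMap R K b)
    (h0 : ∀ a ∈ B, a ≠ 0) [Finite (ClassGroup R)]
    [Finite (Rˣ ⧸ (powMonoidHom ℓ : Rˣ →* Rˣ).range)] {a₀ : R} (ha₀ : a₀ ≠ 0)
    (hB₀ : ∀ a ∈ B, ∃ C : (FractionalIdeal R⁰ K)ˣ, spanSingleton R⁰ (algebraMap R K a) =
      spanSingleton R⁰ (algebraMap R K a₀) * (C : FractionalIdeal R⁰ K) ^ ℓ) :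
    B.encard ≤ Nat.card (ClassGroup R ⧸ (powMonoidHom ℓ : ClassGroup R →* ClassGroup R).range) *
      Nat.card (Rˣ ⧸ (powMonoidHom ℓ : Rˣ →* Rˣ).range) := by
  let T : Set (ClassGroup R) := (powMonoidHom ℓ : ClassGroup R →* ClassGroup R).ker
  have hT : T.encard =
      Nat.card (ClassGroup R ⧸ (powMonoidHom ℓ : ClassGroup R →* ClassGroup R).range) := by
    rw [← ENat.card_coe_set_eq, ENat.card_eq_coe_natCard]
    exact congrArg Nat.cast (MonoidHom.card_ker_eq_index_range _)
  rw [← hT]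
  refine encard_le_encard_mul_of_forall_exists T.toFinite
    (fun a c => ∃ C : (FractionalIdeal R⁰ K)ˣ, spanSingleton R⁰ (algebraMap R K a) =
      spanSingleton R⁰ (algebraMap R K a₀) * (C : FractionalIdeal R⁰ K) ^ ℓ ∧
        ClassGroup.mk K C = c) (fun a ha => ?_) fun c _ => ?_
  · obtain ⟨C, hC⟩ := hB₀ a ha
    refine ⟨ClassGroup.mk K C, ?_, C, hC, rfl⟩
    have ha₀K : algebraMap R K a₀ ≠ 0 := (map_ne_zero_iff _ (IsFractionRing.injective R K)).mpr ha₀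
    have hCpow : ((C ^ ℓ : (FractionalIdeal R⁰ K)ˣ) : FractionalIdeal R⁰ K) =
        spanSingleton R⁰ ((algebraMap R K a₀)⁻¹ * algebraMap R K a) := by
      rw [← spanSingleton_mul_spanSingleton, hC, ← mul_assoc, spanSingleton_mul_spanSingleton,
        inv_mul_cancel₀ ha₀K, spanSingleton_one, one_mul, Units.val_pow_eq_pow_val]
    change ClassGroup.mk K C ^ ℓ = 1
    rw [← map_pow, ClassGroup.mk_eq_one_iff, isPrincipal_iff]
    exact ⟨_, hCpow⟩
  · rcases Set.eq_empty_or_nonempty {a ∈ B | ∃ C : (FractionalIdeal R⁰ K)ˣ,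
        spanSingleton R⁰ (algebraMap R K a) =
          spanSingleton R⁰ (algebraMap R K a₀) * (C : FractionalIdeal R⁰ K) ^ ℓ ∧
        ClassGroup.mk K C = c} with hempty | ⟨a₁, -, C₁, hC₁, rfl⟩
    · simp [hempty]
    refine encard_le_card_units_quotient hℓ (hB.mono (Set.sep_subset _ _))
      (fun a ha => h0 a ha.1) a₁ ?_
    rintro a ⟨-, C, hC, hCC₁⟩
    obtain ⟨x, hx⟩ := ClassGroup.exists_spanSingleton_mul_of_mk_eq hCC₁
    refine ⟨x, ?_⟩
    calc spanSingleton R⁰ (algebraMap R K a)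
        = spanSingleton R⁰ (algebraMap R K a₀) * (spanSingleton R⁰ x * C₁) ^ ℓ := by rw [hC, hx]
      _ = (spanSingleton R⁰ (algebraMap R K a₀) * (C₁ : FractionalIdeal R⁰ K) ^ ℓ) *
          spanSingleton R⁰ (x ^ ℓ) := by rw [mul_pow, spanSingleton_pow]; ring
      _ = spanSingleton R⁰ (x ^ ℓ * algebraMap R K a₁) := by
          rw [← hC₁, spanSingleton_mul_spanSingleton, mul_comm]

end FractionField

theorem exists_spanSingleton_eq_mul_pow_of_span_mul_pow_eq {R K : Type*} [CommRing R]
    [IsDedekindDomain R] [Field K] [Algebra R K] [IsFractionRing R K] {ℓ : ℕ} {a b : R}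
    {D D' : Ideal R} (hD : D ≠ ⊥) (hD' : D' ≠ ⊥)
    (h : Ideal.span {a} * D ^ ℓ = Ideal.span {b} * D' ^ ℓ) :
    ∃ C : (FractionalIdeal R⁰ K)ˣ, spanSingleton R⁰ (algebraMap R K a) =
      spanSingleton R⁰ (algebraMap R K b) * (C : FractionalIdeal R⁰ K) ^ ℓ := by
  have hD0 : (D : FractionalIdeal R⁰ K) ≠ 0 := coeIdeal_ne_zero.mpr hD
  have hD'0 : (D' : FractionalIdeal R⁰ K) ≠ 0 := coeIdeal_ne_zero.mpr hD'
  have hK := congrArg (fun I : Ideal R => (I : FractionalIdeal R⁰ K)) h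
  simp only [coeIdeal_mul, coeIdeal_pow, coeIdeal_span_singleton] at hK
  refine ⟨Units.mk0 _ (div_ne_zero hD'0 hD0), ?_⟩
  rw [Units.val_mk0, div_pow, mul_div_assoc', eq_div_iff (pow_ne_zero _ hD0), hK]

open scoped Classical in
theorem primeToSIdeal_mul_prod_pow_count {k : Type} [Field k] [NumberField k]
    (S : Finset (Ideal (𝓞 k))) {I : Ideal (𝓞 k)} (hI : I ≠ ⊥) :
    primeToSIdeal k S I * ∏ p ∈ S, p ^ (normalizedFactors I).count p = I := by
  have hS : ∏ p ∈ S, p ^ (normalizedFactors I).count p =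
      ∏ p ∈ (normalizedFactors I).toFinset with p ∈ S, p ^ (normalizedFactors I).count p := by
    refine (Finset.prod_subset (fun p hp => (Finset.mem_filter.mp hp).2) fun p hpS hp => ?_).symm
    rw [Multiset.count_eq_zero.mpr fun h =>
      hp (Finset.mem_filter.mpr ⟨Multiset.mem_toFinset.mpr h, hpS⟩), pow_zero]
  rw [primeToSIdeal, hS, mul_comm, Finset.prod_filter_mul_prod_filter_not,
    ← Finset.prod_multiset_count]
  exact associated_iff_eq.mp (prod_normalizedFactors hI)

open scoped Classical in
theorem exists_spanSingleton_eq_mul_pow_of_primeToSIdeal_mul_pow_eq {k : Type} [Field k]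
    [NumberField k] {ℓ : ℕ} {S : Finset (Ideal (𝓞 k))} (hS : ∀ p ∈ S, p ≠ ⊥) {a b : 𝓞 k}
    (ha : a ≠ 0) (hb : b ≠ 0) {J J' : Ideal (𝓞 k)} (hJ : J ≠ ⊥) (hJ' : J' ≠ ⊥)
    (h : primeToSIdeal k S (Ideal.span {a}) * J ^ ℓ = primeToSIdeal k S (Ideal.span {b}) * J' ^ ℓ)
    (hcount : ∀ p ∈ S, (normalizedFactors (Ideal.span {a})).count p % ℓ =
      (normalizedFactors (Ideal.span {b})).count p % ℓ) :
    ∃ C : (FractionalIdeal (𝓞 k)⁰ k)ˣ, spanSingleton (𝓞 k)⁰ (algebraMap (𝓞 k) k a) =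
      spanSingleton (𝓞 k)⁰ (algebraMap (𝓞 k) k b) * (C : FractionalIdeal (𝓞 k)⁰ k) ^ ℓ := by
  have hprod (n : Ideal (𝓞 k) → ℕ) : ∏ p ∈ S, p ^ n p ≠ ⊥ :=
    Finset.prod_ne_zero_iff.mpr fun p hp => pow_ne_zero _ (hS p hp)
  have hspan := mul_prod_pow_mul_pow_eq_of_mod_eq S id hcount h
  simp only [id, primeToSIdeal_mul_prod_pow_count S (Ideal.span_singleton_eq_bot.not.mpr ha),
    primeToSIdeal_mul_prod_pow_count S (Ideal.span_singleton_eq_bot.not.mpr hb)] at hspan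
  exact exists_spanSingleton_eq_mul_pow_of_span_mul_pow_eq (mul_ne_zero hJ (hprod _))
    (mul_ne_zero hJ' (hprod _)) hspan

/-- A fiber of `φ` is encoded as a set `A` of nonzero elements of `𝒪_k`, pairwise inequivalent
modulo `ℓ`-th powers of `k^×`, whose prime-to-`S` parts agree modulo `ℓ`-th powers of ideals. -/
theorem fiber_bound (k : Type) [Field k] [NumberField k] (ℓ : ℕ) (hℓ : ℓ.Prime)
    (S : Finset (Ideal (𝓞 k))) (hS : ∀ p ∈ S, p.IsPrime ∧ p ≠ ⊥)
    (A : Set (𝓞 k)) (h0 : ∀ a ∈ A, a ≠ 0)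
    (hdistinct : ∀ a ∈ A, ∀ b ∈ A, a ≠ b →
      ¬ ∃ γ : k, (algebraMap (𝓞 k) k a) = γ ^ ℓ * (algebraMap (𝓞 k) k b))
    (hfiber : ∀ a ∈ A, ∀ b ∈ A, ∃ J J' : Ideal (𝓞 k), J ≠ ⊥ ∧ J' ≠ ⊥ ∧
      primeToSIdeal k S (Ideal.span {a}) * J ^ ℓ =
        primeToSIdeal k S (Ideal.span {b}) * J' ^ ℓ) :
    A.Finite ∧ A.ncard ≤ ℓ ^ (S.card + NumberField.Units.rank k + 1) *
      Nat.card (ClassGroup (𝓞 k) ⧸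
        (powMonoidHom ℓ : ClassGroup (𝓞 k) →* ClassGroup (𝓞 k)).range) := by
  classical
  have : NeZero ℓ := ⟨hℓ.ne_zero⟩
  have : Group.FG (𝓞 k)ˣ := Group.fg_iff_monoid_fg.mpr inferInstance
  have := Subgroup.finiteIndex_range_powMonoidHom_of_fg (𝓞 k)ˣ hℓ.ne_zero
  set Ncl := Nat.card (ClassGroup (𝓞 k) ⧸ (powMonoidHom ℓ : ClassGroup (𝓞 k) →* _).range)
  set Nu := Nat.card ((𝓞 k)ˣ ⧸ (powMonoidHom ℓ : (𝓞 k)ˣ →* (𝓞 k)ˣ).range)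
  let v : 𝓞 k → S → ZMod ℓ := fun a p => ((normalizedFactors (Ideal.span {a})).count p.1 : ZMod ℓ)
  have hv (w : S → ZMod ℓ) : {a ∈ A | v a = w}.encard ≤ (Ncl * Nu : ℕ) := by
    rcases {a ∈ A | v a = w}.eq_empty_or_nonempty with hempty | ⟨b, hbA, rfl⟩
    · simp [hempty]
    refine encard_le_card_classGroup_quotient_mul_card_units_quotient hℓ.ne_zero
      (Set.Pairwise.mono (Set.sep_subset _ _) hdistinct) (fun a ha => h0 a ha.1) (h0 b hbA) ?_
    rintro a ⟨haA, hab⟩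
    obtain ⟨J, J', hJ, hJ', hJJ'⟩ := hfiber a haA b hbA
    exact exists_spanSingleton_eq_mul_pow_of_primeToSIdeal_mul_pow_eq (fun p hp => (hS p hp).2)
      (h0 a haA) (h0 b hbA) hJ hJ' hJJ' fun p hp =>
        (ZMod.natCast_eq_natCast_iff' _ _ _).mp (congrFun hab ⟨p, hp⟩)
  have hNu : Nu ≤ ℓ ^ (NumberField.Units.rank k + 1) :=
    NumberField.Units.card_quotient_range_powMonoidHom_le k ℓ
  rw [← Set.encard_le_coe_iff_finite_ncard_le]
  calc A.encard ≤ (Set.univ : Set (S → ZMod ℓ)).encard * (Ncl * Nu : ℕ) :=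
        encard_le_encard_mul_of_forall_exists Set.finite_univ (fun a w => v a = w)
          (fun a _ => ⟨v a, trivial, rfl⟩) fun w _ => hv w
    _ = (ℓ ^ S.card * (Ncl * Nu) : ℕ) := by simp
    _ ≤ _ := by
        norm_cast
        rw [add_assoc, pow_add, mul_comm Ncl, ← mul_assoc]
        gcongr
end

section
/- Let ℓ be a prime and k a field of characteristic different from ℓ containing a primitive ℓ-th root of unity ζ. Let α ∈ k^× \ (k^×)^ℓ and set k̂ := k(α^{1/ℓ}). Let σ be a field automorphism of k of finite order such that k̂ is Galois over the fixed field k^{⟨σ⟩}, and let q ∈ ℕ be defined by ζ^σ = ζ^q. Then k̂/k^{⟨σ⟩} is abelian if and only if α^σ = α^q·β^ℓ for some β ∈ k. -/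
/-!
Let `τ` generate `Gal(k̂/k)`, so `τ x = ζ x`, and let `σ'` be a lift of `σ` to `k̂`.
By Artin's theorem `k/F` is finite, and the fixed field of `⟨τ, σ'⟩` is `F`, so `τ` and `σ'`
generate `Gal(k̂/F)`. Hence `k̂/F` is abelian iff `τ (σ' x) = σ' (τ x) = ζ^q σ' x`, i.e. iff
`τ` fixes `σ' x / x^q`, i.e. iff `σ' x / x^q ∈ k`. Since `(σ' x)^ℓ = σ α`, this holds iff
`σ α = α^q β^ℓ` for some `β`: conversely `σ' x / (β x^q)` is an `ℓ`-th root of unity.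
-/

open Polynomial IntermediateField

theorem Subgroup.forall_mul_comm_iff_of_closure_pair_eq_top {G : Type*} [Group G] {a b : G}
    (h : Subgroup.closure {a, b} = ⊤) : (∀ g h : G, g * h = h * g) ↔ a * b = b * a := by
  refine ⟨fun hG => hG a b, fun hab g g' => ?_⟩
  have hcomm := le_centralizer_iff_isMulCommutative.mpr <|
    isMulCommutative_closure (k := {a, b}) (by
      rintro _ (rfl | rfl) _ (rfl | rfl) <;> first | rfl | exact hab | exact hab.symm)
  rw [h] at hcomm
  exact (mem_centralizer_iff.mp (hcomm (mem_top g'))) g (mem_top g)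

theorem IntermediateField.fixedField_zpowers_eq_bot {F E : Type*} [Field F] [Field E]
    [Algebra F E] {σ : E ≃ₐ[F] E} (hfix : ∀ y, σ y = y → y ∈ (algebraMap F E).range) :
    fixedField (Subgroup.zpowers σ) = ⊥ :=
  eq_bot_iff.mpr fun y hy => mem_bot.mpr (hfix y (hy ⟨σ, Subgroup.mem_zpowers σ⟩))

theorem FiniteDimensional.of_fixedField_eq_bot {F E : Type*} [Field F] [Field E]
    [Algebra F E] (H : Subgroup (E ≃ₐ[F] E)) [Finite H] (h : fixedField H = ⊥) :
    FiniteDimensional F E := by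
  have : FiniteDimensional (fixedField H) E :=
    inferInstanceAs (FiniteDimensional (FixedPoints.subfield H E) E)
  rw [h] at this
  exact Module.Finite.trans (⊥ : IntermediateField F E) E

theorem AlgEquiv.eq_iff_apply_eq_of_adjoin_simple_eq_top {F K E : Type*} [Field F] [Field K]
    [Field E] [Algebra F K] [Algebra K E] [Algebra F E] {x : E} (hgen : K⟮x⟯ = ⊤)
    {g₁ g₂ : E ≃ₐ[F] E} (hK : ∀ c, g₁ (algebraMap K E c) = g₂ (algebraMap K E c)) :
    g₁ = g₂ ↔ g₁ x = g₂ x := by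
  refine ⟨fun h => h ▸ rfl, fun hx => ?_⟩
  have hclosure : Subfield.closure (Set.range (algebraMap K E) ∪ {x}) = ⊤ := by
    rw [← adjoin_toSubfield, hgen]; rfl
  refine AlgEquiv.ext fun y => RingHom.eqOn_field_closure (f := (g₁ : E →+* E)) (g := g₂) ?_
    (hclosure ▸ Subfield.mem_top y)
  rintro _ (⟨c, rfl⟩ | rfl)
  exacts [hK c, hx]

theorem apply_eq_self_iff_mem_range_of_zpowers_eq_top {K L : Type*} [Field K] [Field L]
    [Algebra K L] [IsGalois K L] {τ : L ≃ₐ[K] L}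
    (hτ : Subgroup.zpowers τ = ⊤) (z : L) : τ z = z ↔ z ∈ (algebraMap K L).range := by
  refine ⟨fun hz => ?_, by rintro ⟨c, rfl⟩; exact τ.commutes c⟩
  have hstab : Subgroup.zpowers τ ≤ MulAction.stabilizer (L ≃ₐ[K] L) z :=
    Subgroup.zpowers_le.mpr hz
  exact (InfiniteGalois.mem_range_algebraMap_iff_fixed z).mpr fun f =>
    hstab (hτ ▸ Subgroup.mem_top f)

theorem closure_restrictScalars_pair_eq_top {F K E : Type*} [Field F] [Field K] [Field E]
    [Algebra F K] [Algebra K E] [Algebra F E] [IsScalarTower F K E] [FiniteDimensional F E]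
    [IsGalois K E] {τ : E ≃ₐ[K] E} (hτ : Subgroup.zpowers τ = ⊤) {σ : K ≃ₐ[F] K}
    (hfix : ∀ c, σ c = c → c ∈ (algebraMap F K).range) {g : E ≃ₐ[F] E}
    (hg : ∀ c, g (algebraMap K E c) = algebraMap K E (σ c)) :
    Subgroup.closure {τ.restrictScalars F, g} = ⊤ := by
  suffices h : fixedField (Subgroup.closure {τ.restrictScalars F, g}) = ⊥ by
    rw [← fixingSubgroup_fixedField (Subgroup.closure _), h, fixingSubgroup_bot]
  refine eq_bot_iff.mpr fun y hy => ?_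
  rw [mem_fixedField_iff] at hy
  obtain ⟨c, rfl⟩ := (apply_eq_self_iff_mem_range_of_zpowers_eq_top hτ y).mp
    (hy _ (Subgroup.subset_closure (Set.mem_insert _ _)))
  obtain ⟨f, rfl⟩ := hfix c ((algebraMap K E).injective
    ((hg c).symm.trans (hy g (Subgroup.subset_closure (Set.mem_insert_of_mem _ rfl)))))
  exact mem_bot.mpr ⟨f, IsScalarTower.algebraMap_apply F K E f⟩

section Kummer

variable {K L : Type*} [Field K] [Field L] [Algebra K L]

theorem isSplittingField_X_pow_sub_C_of_adjoin_eq_top {n : ℕ} [NeZero n] {ζ : K}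
    (hζ : IsPrimitiveRoot ζ n) {a : K} {x : L} (hx : x ^ n = algebraMap K L a)
    (hgen : K⟮x⟯ = ⊤) :
    IsSplittingField K L (X ^ n - C a) := by
  refine ⟨?_, ?_⟩
  · rw [Polynomial.map_sub, Polynomial.map_pow, map_C, map_X]
    exact X_pow_sub_C_splits_of_isPrimitiveRoot
      (hζ.map_of_injective (algebraMap K L).injective) hx
  · rw [eq_top_iff, ← top_toSubalgebra, ← hgen,
      adjoin_simple_toSubalgebra_of_isAlgebraic ?_]
    · apply Algebra.adjoin_mono
      rw [Set.singleton_subset_iff, mem_rootSet_of_ne (X_pow_sub_C_ne_zero (NeZero.pos n) a),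
        aeval_def, eval₂_sub, eval₂_X_pow, eval₂_C, hx, sub_self]
    · exact ⟨X ^ n - C a, X_pow_sub_C_ne_zero (NeZero.pos n) a, by simp [hx]⟩

theorem exists_zpowers_eq_top_apply_eq_mul {ℓ : ℕ} [Fact ℓ.Prime] {ζ : K}
    (hζ : IsPrimitiveRoot ζ ℓ) {a : K} (hirr : Irreducible (X ^ ℓ - C a))
    [IsSplittingField K L (X ^ ℓ - C a)] {x : L} (hx0 : x ≠ 0)
    (hx : x ^ ℓ = algebraMap K L a) :
    ∃ τ : L ≃ₐ[K] L, Subgroup.zpowers τ = ⊤ ∧ τ x = algebraMap K L ζ * x := by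
  have hℓ : ℓ.Prime := Fact.out
  have := IsSplittingField.finiteDimensional L (X ^ ℓ - C a)
  have hζ' : (primitiveRoots ℓ K).Nonempty := ⟨ζ, (mem_primitiveRoots hℓ.pos).mpr hζ⟩
  have := isGalois_of_isSplittingField_X_pow_sub_C hζ' hirr L
  let τ := (autEquivZmod hirr L hζ).symm (Multiplicative.ofAdd 1)
  have hτx : τ x = algebraMap K L ζ * x := by
    have := autEquivZmod_symm_apply_natCast hirr L hx hζ 1
    simpa [Algebra.smul_def] using this
  refine ⟨τ, zpowers_eq_top_of_prime_card (p := ℓ) ?_ fun h1 => ?_, hτx⟩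
  · rw [IsGalois.card_aut_eq_finrank, finrank_of_isSplittingField_X_pow_sub_C hζ' hirr L]
  · have : algebraMap K L ζ * x = 1 * x := by rw [← hτx, h1, AlgEquiv.one_apply, one_mul]
    exact hζ.ne_one hℓ.one_lt
      ((algebraMap K L).injective (by simpa using mul_right_cancel₀ hx0 this))

theorem apply_div_pow_eq_iff (τ : L ≃ₐ[K] L) {c x : L} (hc : c ≠ 0) (hx : x ≠ 0)
    (hτx : τ x = c * x) (y : L) (q : ℕ) :
    τ (y / x ^ q) = y / x ^ q ↔ τ y = c ^ q * y := by
  rw [map_div₀, map_pow, hτx, mul_pow,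
    div_eq_div_iff (mul_ne_zero (pow_ne_zero _ hc) (pow_ne_zero _ hx)) (pow_ne_zero _ hx),
    ← mul_assoc, mul_comm y, mul_left_inj' (pow_ne_zero q hx)]

theorem exists_eq_pow_mul_pow_iff_div_pow_mem_range {ℓ : ℕ} [NeZero ℓ] {ζ : K}
    (hζ : IsPrimitiveRoot ζ ℓ) {α a : K} (hα : α ≠ 0)
    {x y : L} (hx : x ^ ℓ = algebraMap K L α) (hy : y ^ ℓ = algebraMap K L a) (q : ℕ) :
    (∃ β, a = α ^ q * β ^ ℓ) ↔ y / x ^ q ∈ (algebraMap K L).range := by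
  have hx0 : x ≠ 0 := ne_zero_pow (NeZero.ne ℓ) (hx ▸ (_root_.map_ne_zero _).mpr hα)
  constructor
  · rintro ⟨β, rfl⟩
    have hw : (y / x ^ q) ^ ℓ = algebraMap K L β ^ ℓ := by
      rw [div_pow, hy, ← pow_mul, mul_comm q ℓ, pow_mul, hx, ← map_pow, ← map_div₀,
        mul_div_cancel_left₀ _ (pow_ne_zero q hα), map_pow]
    rcases eq_or_ne β 0 with rfl | hβ
    · rw [map_zero, zero_pow (NeZero.ne ℓ), pow_eq_zero_iff (NeZero.ne ℓ)] at hw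
      exact hw ▸ zero_mem _
    · have hβ' : algebraMap K L β ≠ 0 := (_root_.map_ne_zero _).mpr hβ
      have hroot : (y / x ^ q / algebraMap K L β) ^ ℓ = 1 := by
        rw [div_pow, hw, div_self (pow_ne_zero _ hβ')]
      obtain ⟨i, -, hi⟩ :=
        (hζ.map_of_injective (algebraMap K L).injective).eq_pow_of_pow_eq_one hroot
      exact ⟨ζ ^ i * β, by rw [map_mul, map_pow, hi, div_mul_cancel₀ _ hβ']⟩
  · rintro ⟨c, hc⟩
    have hyc : y = algebraMap K L c * x ^ q := by rw [hc, div_mul_cancel₀ _ (pow_ne_zero _ hx0)]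
    refine ⟨c, (algebraMap K L).injective ?_⟩
    rw [← hy, hyc, mul_pow, ← pow_mul, mul_comm q ℓ, pow_mul, hx, map_mul, map_pow, map_pow,
      mul_comm]

end Kummer

theorem abelian_kummer_iff_general (ℓ : ℕ) (hℓ : ℓ.Prime)
    (F k khat : Type) [Field F] [Field k] [Field khat]
    [Algebra F k] [Algebra k khat] [Algebra F khat] [IsScalarTower F k khat]
    (ζ : k) (hζ : IsPrimitiveRoot ζ ℓ)
    (α : k) (hα : α ≠ 0) (hαpow : ∀ β : k, β ^ ℓ ≠ α)
    (x : khat) (hx : x ^ ℓ = algebraMap k khat α)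
    (hgen : IntermediateField.adjoin k {x} = ⊤)
    (σ : k ≃ₐ[F] k) (hfin : IsOfFinOrder σ)
    (hfix : ∀ y : k, σ y = y → y ∈ (algebraMap F k).range)
    (hGal : IsGalois F khat)
    (q : ℕ) (hq : σ ζ = ζ ^ q) :
    (∀ g h : khat ≃ₐ[F] khat, g * h = h * g) ↔ ∃ β : k, σ α = α ^ q * β ^ ℓ := by
  have : Fact ℓ.Prime := ⟨hℓ⟩
  have hx0 : x ≠ 0 := ne_zero_pow hℓ.ne_zero (hx ▸ (_root_.map_ne_zero _).mpr hα)
  have hirr := X_pow_sub_C_irreducible_of_prime hℓ hαpow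
  have := isSplittingField_X_pow_sub_C_of_adjoin_eq_top hζ hx hgen
  have := IsSplittingField.finiteDimensional khat (X ^ ℓ - C α)
  have := isGalois_of_isSplittingField_X_pow_sub_C
    ⟨ζ, (mem_primitiveRoots hℓ.pos).mpr hζ⟩ hirr khat
  obtain ⟨τ, hτ, hτx⟩ := exists_zpowers_eq_top_apply_eq_mul hζ hirr hx0 hx
  have : Finite (Subgroup.zpowers σ) := hfin.finite_zpowers.to_subtype
  have : FiniteDimensional F k := .of_fixedField_eq_bot _ (fixedField_zpowers_eq_bot hfix)
  have : FiniteDimensional F khat := Module.Finite.trans k khat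
  set σ' := σ.liftNormal khat
  have hσ' : ∀ c, σ' (algebraMap k khat c) = algebraMap k khat (σ c) :=
    σ.liftNormal_commutes khat
  have hσ'x : σ' x ^ ℓ = algebraMap k khat (σ α) := by rw [← map_pow, hx, hσ']
  have hζ0 : algebraMap k khat ζ ≠ 0 := (_root_.map_ne_zero _).mpr (hζ.ne_zero hℓ.ne_zero)
  rw [Subgroup.forall_mul_comm_iff_of_closure_pair_eq_top
      (closure_restrictScalars_pair_eq_top hτ hfix hσ'),
    AlgEquiv.eq_iff_apply_eq_of_adjoin_simple_eq_top hgen fun c => by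
      simp only [AlgEquiv.mul_apply, AlgEquiv.restrictScalars_apply, hσ', AlgEquiv.commutes],
    exists_eq_pow_mul_pow_iff_div_pow_mem_range hζ hα hx hσ'x,
    ← apply_eq_self_iff_mem_range_of_zpowers_eq_top hτ, apply_div_pow_eq_iff τ hζ0 hx0 hτx]
  simp only [AlgEquiv.mul_apply, AlgEquiv.restrictScalars_apply, hτx, map_mul, hσ', hq, map_pow]

/-- Šafarevič's lemma on abelian Kummer extensions (Lemma 2.8): let `k` be a field of
characteristic different from `ℓ` containing a primitive `ℓ`-th root of unity `ζ`, let
`α ∈ k^× \ (k^×)^ℓ` and `k̂ = k(α^{1/ℓ})`.  Let `σ` be an automorphism of `k` of finite order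
with fixed field `F` such that `k̂/F` is Galois, and let `q` be defined by `ζ^σ = ζ^q`.
Then `k̂/F` is abelian if and only if `α^σ = α^q·β^ℓ` for some `β ∈ k`. -/
theorem abelian_kummer_iff (ℓ : ℕ) (hℓ : ℓ.Prime)
    (F k khat : Type) [Field F] [Field k] [Field khat]
    [Algebra F k] [Algebra k khat] [Algebra F khat] [IsScalarTower F k khat]
    (hchar : (ℓ : k) ≠ 0)
    (ζ : k) (hζ : IsPrimitiveRoot ζ ℓ)
    (α : k) (hα : α ≠ 0) (hαpow : ∀ β : k, β ^ ℓ ≠ α)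
    (x : khat) (hx : x ^ ℓ = algebraMap k khat α)
    (hgen : IntermediateField.adjoin k {x} = ⊤)
    (σ : k ≃ₐ[F] k) (hfin : IsOfFinOrder σ)
    (hfix : ∀ y : k, σ y = y → y ∈ (algebraMap F k).range)
    (hGal : IsGalois F khat)
    (q : ℕ) (hq : σ ζ = ζ ^ q) :
    (∀ g h : khat ≃ₐ[F] khat, g * h = h * g) ↔ ∃ β : k, σ α = α ^ q * β ^ ℓ :=
  abelian_kummer_iff_general ℓ hℓ F k khat ζ hζ α hα hαpow x hx hgen σ hfin hfix hGal q hq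
end
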